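/- arXiv:math/0108212 — 2 statements merged into one kernel-verified Lean document; each statement's English description precedes it below -/
import Mathlib

section
/- Let F be a compact convex subset of ℝⁿ with non-empty interior, let L ⊆ ℝⁿ be a line, and let ℙ denote the orthogonal projection of ℝⁿ onto L. Let I = ℙ(F), let E₀ ⊆ I be a closed set, and set E = F ∩ ℙ⁻¹(E₀). Then for every λ > 1, the core E_{λ,F} is contained in F ∩ ℙ⁻¹((E₀)_{λ,I}), where (E₀)_{λ,I} = {x ∈ E₀ : for every subinterval J ⊆ I with x ∈ J, |E₀ ∩ J| ≥ ((λ−1)/λ)|J|}. -/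
open MeasureTheory

/-- The one-dimensional Lebesgue measure of the intersection of a set `E` with the
segment from `a` to `b`, computed via the affine parametrization of the segment. -/
noncomputable def segmentMeasure {n : ℕ} (E : Set (EuclideanSpace ℝ (Fin n)))
    (a b : EuclideanSpace ℝ (Fin n)) : ℝ :=
  dist a b * (volume {t : ℝ | t ∈ Set.Icc (0 : ℝ) 1 ∧ a + t • (b - a) ∈ E}).toReal

/-- The core `E_{λ,F}` : the set of points `x ∈ E` such that for every segment `J`
with `x ∈ J ⊆ F`, the one-dimensional measure of `E ∩ J` is at least `((λ-1)/λ)·|J|`.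
When `F` is a subset `I` of a line, segments contained in `I` are exactly the
subintervals of `I`, so this also gives the one-dimensional core `E_{λ,I}`. -/
noncomputable def core {n : ℕ} (E F : Set (EuclideanSpace ℝ (Fin n))) (lam : ℝ) :
    Set (EuclideanSpace ℝ (Fin n)) :=
  {x | x ∈ E ∧ ∀ a b : EuclideanSpace ℝ (Fin n),
    x ∈ segment ℝ a b → segment ℝ a b ⊆ F →
      ((lam - 1) / lam) * dist a b ≤ segmentMeasure E a b}

open Pointwise in
lemma combine_aux (P : ℝ → Prop) (hP : MeasurableSet {t | P t}) (s θ : ℝ)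
    (hs : s ∈ Set.Icc (0:ℝ) 1) (hθ : 0 ≤ θ)
    (h1 : s = 0 ∨ ENNReal.ofReal θ ≤ volume {t : ℝ | t ∈ Set.Icc (0:ℝ) 1 ∧ P (s*t)})
    (h2 : s = 1 ∨ ENNReal.ofReal θ ≤ volume {t : ℝ | t ∈ Set.Icc (0:ℝ) 1 ∧ P (s + (1-s)*t)}) :
    ENNReal.ofReal θ ≤ volume {t : ℝ | t ∈ Set.Icc (0:ℝ) 1 ∧ P t} := by
  rcases h1 with rfl | h1
  · rcases h2 with h20 | h2
    · exact absurd h20 (by norm_num)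
    · simpa using h2
  rcases h2 with rfl | h2
  · simpa using h1
  set S : Set ℝ := {t : ℝ | t ∈ Set.Icc (0:ℝ) 1 ∧ P t} with hSdef
  have hSmeas : MeasurableSet S := by
    have : S = Set.Icc (0:ℝ) 1 ∩ {t | P t} := rfl
    rw [this]; exact measurableSet_Icc.inter hP
  set A : Set ℝ := S ∩ Set.Icc 0 s with hAdef
  set B : Set ℝ := S ∩ Set.Ioc s 1 with hBdef
  have hdisj : Disjoint A B := by
    rw [Set.disjoint_left]
    rintro t ⟨-, -, hts⟩ ⟨-, hst, -⟩
    linarith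
  have hBmeas : MeasurableSet B := hSmeas.inter measurableSet_Ioc
  have hA : ENNReal.ofReal s * ENNReal.ofReal θ ≤ volume A := by
    calc ENNReal.ofReal s * ENNReal.ofReal θ
        ≤ ENNReal.ofReal s * volume {t : ℝ | t ∈ Set.Icc (0:ℝ) 1 ∧ P (s*t)} :=
          mul_le_mul_right h1 _
      _ = volume (s • {t : ℝ | t ∈ Set.Icc (0:ℝ) 1 ∧ P (s*t)}) := by
          rw [Measure.addHaar_smul]
          simp [abs_of_nonneg hs.1]
      _ ≤ volume A := by
          apply measure_mono
          rintro _ ⟨t, ⟨⟨ht0, ht1⟩, hPt⟩, rfl⟩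
          have h0 : 0 ≤ s * t := mul_nonneg hs.1 ht0
          have h1' : s * t ≤ s := mul_le_of_le_one_right hs.1 ht1
          exact ⟨⟨⟨h0, h1'.trans hs.2⟩, hPt⟩, h0, h1'⟩
  have hB : ENNReal.ofReal (1 - s) * ENNReal.ofReal θ ≤ volume B := by
    have himg : (fun u : ℝ => s + (1-s)*u) '' {t : ℝ | t ∈ Set.Icc (0:ℝ) 1 ∧ P (s + (1-s)*t)}
        = (s + ·) '' ((1-s) • {t : ℝ | t ∈ Set.Icc (0:ℝ) 1 ∧ P (s + (1-s)*t)}) := by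
      rw [← Set.image_smul, Set.image_image]
      simp only [smul_eq_mul]
    calc ENNReal.ofReal (1-s) * ENNReal.ofReal θ
        ≤ ENNReal.ofReal (1-s) * volume {t : ℝ | t ∈ Set.Icc (0:ℝ) 1 ∧ P (s + (1-s)*t)} :=
          mul_le_mul_right h2 _
      _ = volume ((fun u : ℝ => s + (1-s)*u) '' {t : ℝ | t ∈ Set.Icc (0:ℝ) 1 ∧ P (s + (1-s)*t)}) := by
          rw [himg]
          have htrans : volume ((s + ·) '' ((1-s) • {t : ℝ | t ∈ Set.Icc (0:ℝ) 1 ∧ P (s + (1-s)*t)}))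
              = volume ((1-s) • {t : ℝ | t ∈ Set.Icc (0:ℝ) 1 ∧ P (s + (1-s)*t)}) := by
            have h' : (s + ·) '' ((1-s) • {t : ℝ | t ∈ Set.Icc (0:ℝ) 1 ∧ P (s + (1-s)*t)})
                = s +ᵥ ((1-s) • {t : ℝ | t ∈ Set.Icc (0:ℝ) 1 ∧ P (s + (1-s)*t)}) := rfl
            rw [h', measure_vadd]
          rw [htrans, Measure.addHaar_smul]
          simp [abs_of_nonneg (by linarith [hs.2] : (0:ℝ) ≤ 1 - s)]
      _ ≤ volume (B ∪ {s}) := by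
          apply measure_mono
          rintro _ ⟨t, ⟨⟨ht0, ht1⟩, hPt⟩, rfl⟩
          show s + (1-s)*t ∈ B ∪ {s}
          rcases eq_or_ne (s + (1-s)*t) s with he | hne
          · right; simp [he]
          · left
            have hw0 : 0 ≤ (1-s)*t := mul_nonneg (by linarith [hs.2]) ht0
            have hw1 : (1-s)*t ≤ 1-s := mul_le_of_le_one_right (by linarith [hs.2]) ht1
            have hs_lt : s < s + (1-s)*t := lt_of_le_of_ne (by linarith) (Ne.symm hne)
            exact ⟨⟨⟨by linarith [hs.1], by linarith⟩, hPt⟩, hs_lt, by linarith⟩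
      _ ≤ volume B + volume {s} := measure_union_le _ _
      _ = volume B := by simp
  calc ENNReal.ofReal θ = ENNReal.ofReal (s*θ + (1-s)*θ) := by ring_nf
    _ = ENNReal.ofReal (s*θ) + ENNReal.ofReal ((1-s)*θ) :=
        ENNReal.ofReal_add (mul_nonneg hs.1 hθ) (mul_nonneg (by linarith [hs.2]) hθ)
    _ = ENNReal.ofReal s * ENNReal.ofReal θ + ENNReal.ofReal (1-s) * ENNReal.ofReal θ := by
        rw [ENNReal.ofReal_mul hs.1, ENNReal.ofReal_mul (by linarith [hs.2] : (0:ℝ) ≤ 1 - s)]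
    _ ≤ volume A + volume B := add_le_add hA hB
    _ = volume (A ∪ B) := (measure_union hdisj hBmeas).symm
    _ ≤ volume S := measure_mono (Set.union_subset Set.inter_subset_left Set.inter_subset_left)

/-- For a cylindrical set `E = F ∩ ℙ⁻¹(E₀)` over a closed set `E₀ ⊆ I = ℙ(F)`,
where `ℙ` is the orthogonal projection onto the line `L = {p + t•v}` (`‖v‖ = 1`),
the core `E_{λ,F}` is contained in `F ∩ ℙ⁻¹((E₀)_{λ,I})`. -/
theorem core_of_cylinder_subset {n : ℕ}
    (F : Set (EuclideanSpace ℝ (Fin n)))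
    (hFcomp : IsCompact F) (hFconv : Convex ℝ F) (hFint : (interior F).Nonempty)
    (p v : EuclideanSpace ℝ (Fin n)) (hv : ‖v‖ = 1)
    (proj : EuclideanSpace ℝ (Fin n) → EuclideanSpace ℝ (Fin n))
    (hproj : ∀ x, proj x = p + (inner ℝ (x - p) v : ℝ) • v)
    (E₀ : Set (EuclideanSpace ℝ (Fin n))) (hE₀closed : IsClosed E₀)
    (hE₀I : E₀ ⊆ proj '' F)
    (lam : ℝ) (hlam : 1 < lam) :
    core (F ∩ proj ⁻¹' E₀) F lam ⊆ F ∩ proj ⁻¹' (core E₀ (proj '' F) lam) := by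
  intro x hx
  obtain ⟨⟨hxF, hxE₀⟩, hcore⟩ := hx
  have hθ0 : 0 ≤ (lam - 1)/lam := div_nonneg (by linarith) (by linarith)
  refine ⟨hxF, hxE₀, ?_⟩
  intro a b hcab hsub
  rcases eq_or_ne a b with rfl | hab
  · simp only [dist_self, mul_zero, segmentMeasure, zero_mul]
    exact le_refl 0
  obtain ⟨xa, hxaF, hxa⟩ := hsub (left_mem_segment ℝ a b)
  obtain ⟨xb, hxbF, hxb⟩ := hsub (right_mem_segment ℝ a b)
  rw [segment_eq_image'] at hcab
  obtain ⟨s, hs, hcs'⟩ := hcab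
  have hcs : a + s • (b - a) = proj x := hcs'
  have hprojline : ∀ (y z : EuclideanSpace ℝ (Fin n)) (t : ℝ),
      proj (y + t • (z - y)) = proj y + t • (proj z - proj y) := by
    intro y z t
    simp only [hproj]
    have h1 : y + t • (z - y) - p = (y - p) + t • (z - y) := by abel
    have h2 : (inner ℝ (z - y) v : ℝ) = inner ℝ (z - p) v - inner ℝ (y - p) v := by
      rw [show (z - y : EuclideanSpace ℝ (Fin n)) = (z - p) - (y - p) from by abel,
        inner_sub_left]
    rw [h1, inner_add_left, real_inner_smul_left, h2]
    module
  set P : ℝ → Prop := fun u => a + u • (b - a) ∈ E₀ with hPdef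
  have hPmeas : MeasurableSet {t | P t} := by
    have hcont : Continuous fun t : ℝ => a + t • (b - a) :=
      continuous_const.add (continuous_id.smul continuous_const)
    exact (hE₀closed.preimage hcont).measurableSet
  have h1 : s = 0 ∨ ENNReal.ofReal ((lam-1)/lam) ≤
      volume {t : ℝ | t ∈ Set.Icc (0:ℝ) 1 ∧ P (s*t)} := by
    rcases eq_or_ne s 0 with h | hsne
    · exact Or.inl h
    right
    have hxane : xa ≠ x := by
      intro h
      have hpq : proj xa = proj x := by rw [h]
      rw [hxa, ← hcs] at hpq
      have hz : s • (b - a) = 0 := by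
        have h' : s • (b - a) = (a + s • (b - a)) - a := by module
        rw [h', ← hpq, sub_self]
      rcases smul_eq_zero.mp hz with h' | h'
      · exact hsne h'
      · exact hab (sub_eq_zero.mp h').symm
    have hd : 0 < dist xa x := dist_pos.2 hxane
    have hseg := hcore xa x (right_mem_segment ℝ xa x) (hFconv.segment_subset hxaF hxF)
    have hsetEq : {t : ℝ | t ∈ Set.Icc (0:ℝ) 1 ∧ xa + t • (x - xa) ∈ F ∩ proj ⁻¹' E₀}
        = {t : ℝ | t ∈ Set.Icc (0:ℝ) 1 ∧ P (s*t)} := by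
      ext t
      simp only [Set.mem_setOf_eq, Set.mem_inter_iff, Set.mem_preimage]
      apply and_congr_right
      intro ht
      have hmemF : xa + t • (x - xa) ∈ F := by
        apply hFconv.segment_subset hxaF hxF
        rw [segment_eq_image']
        exact ⟨t, ht, rfl⟩
      have hprojeq : proj (xa + t • (x - xa)) = a + (s*t) • (b - a) := by
        rw [hprojline, hxa, ← hcs, add_sub_cancel_left, smul_smul, mul_comm]
      rw [hprojeq]
      simp [hmemF, hPdef]
    unfold segmentMeasure at hseg
    rw [hsetEq] at hseg
    have hle : (lam-1)/lam ≤ (volume {t : ℝ | t ∈ Set.Icc (0:ℝ) 1 ∧ P (s*t)}).toReal := by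
      nlinarith [hseg, hd]
    exact ENNReal.ofReal_le_of_le_toReal hle
  have h2 : s = 1 ∨ ENNReal.ofReal ((lam-1)/lam) ≤
      volume {t : ℝ | t ∈ Set.Icc (0:ℝ) 1 ∧ P (s + (1-s)*t)} := by
    rcases eq_or_ne s 1 with h | hsne
    · exact Or.inl h
    right
    have hxbne : x ≠ xb := by
      intro h
      have hpq : proj x = proj xb := by rw [h]
      rw [hxb, ← hcs] at hpq
      have hz : (1-s) • (b - a) = 0 := by
        have h' : (1-s) • (b - a) = b - (a + s • (b - a)) := by module
        rw [h', hpq, sub_self]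
      rcases smul_eq_zero.mp hz with h' | h'
      · have : (1:ℝ) - s = 0 := h'
        exact hsne (by linarith)
      · exact hab (sub_eq_zero.mp h').symm
    have hd : 0 < dist x xb := dist_pos.2 hxbne
    have hseg := hcore x xb (left_mem_segment ℝ x xb) (hFconv.segment_subset hxF hxbF)
    have hsetEq : {t : ℝ | t ∈ Set.Icc (0:ℝ) 1 ∧ x + t • (xb - x) ∈ F ∩ proj ⁻¹' E₀}
        = {t : ℝ | t ∈ Set.Icc (0:ℝ) 1 ∧ P (s + (1-s)*t)} := by
      ext t
      simp only [Set.mem_setOf_eq, Set.mem_inter_iff, Set.mem_preimage]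
      apply and_congr_right
      intro ht
      have hmemF : x + t • (xb - x) ∈ F := by
        apply hFconv.segment_subset hxF hxbF
        rw [segment_eq_image']
        exact ⟨t, ht, rfl⟩
      have hprojeq : proj (x + t • (xb - x)) = a + (s + (1-s)*t) • (b - a) := by
        rw [hprojline, hxb, ← hcs]
        module
      rw [hprojeq]
      simp [hmemF, hPdef]
    unfold segmentMeasure at hseg
    rw [hsetEq] at hseg
    have hle : (lam-1)/lam ≤
        (volume {t : ℝ | t ∈ Set.Icc (0:ℝ) 1 ∧ P (s + (1-s)*t)}).toReal := by
      nlinarith [hseg, hd]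
    exact ENNReal.ofReal_le_of_le_toReal hle
  have hkey := combine_aux P hPmeas s ((lam-1)/lam) hs hθ0 h1 h2
  have hvolS_le : volume {t : ℝ | t ∈ Set.Icc (0:ℝ) 1 ∧ P t} ≤ 1 := by
    calc volume {t : ℝ | t ∈ Set.Icc (0:ℝ) 1 ∧ P t} ≤ volume (Set.Icc (0:ℝ) 1) :=
          measure_mono fun t ht => ht.1
      _ = 1 := by simp [Real.volume_Icc]
  have hne : volume {t : ℝ | t ∈ Set.Icc (0:ℝ) 1 ∧ P t} ≠ ⊤ :=
    (hvolS_le.trans_lt ENNReal.one_lt_top).ne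
  have hθle : (lam-1)/lam ≤ (volume {t : ℝ | t ∈ Set.Icc (0:ℝ) 1 ∧ P t}).toReal := by
    have := ENNReal.toReal_mono hne hkey
    rwa [ENNReal.toReal_ofReal hθ0] at this
  show (lam - 1)/lam * dist a b ≤ segmentMeasure E₀ a b
  unfold segmentMeasure
  have hg : {t : ℝ | t ∈ Set.Icc (0:ℝ) 1 ∧ a + t • (b - a) ∈ E₀}
      = {t : ℝ | t ∈ Set.Icc (0:ℝ) 1 ∧ P t} := rfl
  rw [hg]
  nlinarith [dist_nonneg (x := a) (y := b), hθle,
    ENNReal.toReal_nonneg (a := volume {t : ℝ | t ∈ Set.Icc (0:ℝ) 1 ∧ P t})]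
end

section
/- Let P be a polynomial of degree at most d on ℝ, let J ⊂ ℝ be a compact interval, and let E ⊆ J be a measurable set with positive Lebesgue measure |E| > 0. Then max_{x ∈ J} |P(x)| ≤ (4|J|/|E|)^d · sup_{x ∈ E} |P(x)|. -/
set_option maxHeartbeats 1000000

open MeasureTheory Polynomial Polynomial.Chebyshev Finset Real

lemma remez_cheb_deg_coeff : ∀ n : ℕ, (T ℝ n).natDegree ≤ n ∧
    (T ℝ n).coeff n = if n = 0 then 1 else 2 ^ (n - 1)
  | 0 => by simp [T_zero]
  | 1 => by simp [T_one]
  | (n + 2) => by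
    have h1 := remez_cheb_deg_coeff (n + 1)
    have h0 := remez_cheb_deg_coeff n
    have hrec : T ℝ ((n : ℤ) + 2) = 2 * X * T ℝ ((n : ℤ) + 1) - T ℝ (n : ℤ) := T_add_two ℝ n
    have hcast : ((n + 2 : ℕ) : ℤ) = (n : ℤ) + 2 := by push_cast; ring
    have hcast1 : ((n + 1 : ℕ) : ℤ) = (n : ℤ) + 1 := by push_cast; ring
    rw [hcast, hrec, ← hcast1]
    constructor
    · refine (natDegree_sub_le _ _).trans (max_le ?_ (h0.1.trans (by omega)))
      calc (2 * X * T ℝ (n+1 : ℕ)).natDegree ≤ (2 * X : ℝ[X]).natDegree + (T ℝ (n+1:ℕ)).natDegree :=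
            natDegree_mul_le
        _ ≤ 1 + (n + 1) := by
            gcongr
            · calc ((2 : ℝ[X]) * X).natDegree ≤ (2:ℝ[X]).natDegree + X.natDegree := natDegree_mul_le
                _ ≤ 1 := by simp [natDegree_X]
            · exact h1.1
        _ = n + 2 := by ring
    · have e1 : (2 * X * T ℝ (n+1 : ℕ)).coeff (n + 2) = 2 * (T ℝ (n+1:ℕ)).coeff (n+1) := by
        have : (2 : ℝ[X]) * X * T ℝ (n+1:ℕ) = C 2 * (X * T ℝ (n+1:ℕ)) := by
          rw [show ((2 : ℝ[X])) = C 2 from (Polynomial.C_eq_natCast 2).symm]; ring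
        rw [this, coeff_C_mul, coeff_X_mul]
      have e0 : (T ℝ (n : ℕ)).coeff (n + 2) = 0 :=
        coeff_eq_zero_of_natDegree_lt (by omega)
      rw [coeff_sub, e1, e0, h1.2]
      simp [pow_succ]
      ring

lemma remez_basis_coeff (s : Finset ℕ) (c : ℕ → ℝ) (i : ℕ) (n : ℕ) (hn : (s.erase i).card = n) :
    (Lagrange.basis s c i).coeff n = ∏ j ∈ s.erase i, (c i - c j)⁻¹ := by
  classical
  have hW : ∀ W : ℝ[X], W = ∏ j ∈ s.erase i, (X - C (c j)) → W.coeff n = 1 := by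
    intro W hWdef
    have hmon : W.Monic := hWdef ▸ monic_prod_of_monic _ _ fun j _ => monic_X_sub_C _
    have hdeg : W.natDegree = n := by
      rw [hWdef, natDegree_prod_of_monic _ _ fun j _ => monic_X_sub_C _]
      simp [natDegree_X_sub_C, hn]
    rw [← hdeg]
    exact hmon.coeff_natDegree
  have : Lagrange.basis s c i =
      C (∏ j ∈ s.erase i, (c i - c j)⁻¹) * ∏ j ∈ s.erase i, (X - C (c j)) := by
    unfold Lagrange.basis Lagrange.basisDivisor
    rw [Finset.prod_mul_distrib, map_prod]
  rw [this, coeff_C_mul, hW _ rfl, mul_one]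

lemma remez_prod_sign (d i : ℕ) (hi : i ∈ Finset.range (d+1)) (c : ℕ → ℝ)
    (hanti : ∀ p q : ℕ, p < q → q ≤ d → c q < c p) :
    ∏ j ∈ (Finset.range (d+1)).erase i, (c i - c j)
      = (-1)^i * ∏ j ∈ (Finset.range (d+1)).erase i, |c i - c j| := by
  classical
  have hi' : i ≤ d := by simpa [Nat.lt_succ_iff] using Finset.mem_range.mp hi
  have step : ∀ j ∈ (Finset.range (d+1)).erase i,
      c i - c j = (if j < i then (-1:ℝ) else 1) * |c i - c j| := by
    intro j hj
    obtain ⟨hne, hjr⟩ := Finset.mem_erase.mp hj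
    have hj' : j ≤ d := by simpa [Nat.lt_succ_iff] using Finset.mem_range.mp hjr
    rcases lt_or_gt_of_ne hne with h | h
    · have : c i - c j < 0 := sub_neg.mpr (hanti j i h hi')
      rw [if_pos h, abs_of_neg this]; ring
    · have : 0 < c i - c j := sub_pos.mpr (hanti i j h hj')
      rw [if_neg (by omega), abs_of_pos this]; ring
  rw [Finset.prod_congr rfl step, Finset.prod_mul_distrib]
  congr 1
  rw [Finset.prod_ite, Finset.prod_const, Finset.prod_const, one_pow, mul_one]
  congr 1
  have : ((Finset.range (d+1)).erase i).filter (· < i) = Finset.range i := by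
    ext j; simp only [Finset.mem_filter, Finset.mem_erase, Finset.mem_range]; omega
  rw [this, Finset.card_range]

lemma remez_cheb_nodes_eval (d : ℕ) (hd : 1 ≤ d) (i : ℕ) :
    (T ℝ d).eval (Real.cos (i * Real.pi / d)) = (-1)^i := by
  have hdpos : (0:ℝ) < d := by exact_mod_cast hd
  have hθ : (d : ℝ) * (i * Real.pi / d) = i * Real.pi := by
    field_simp
  have := Polynomial.Chebyshev.T_real_cos (i * Real.pi / d) d
  rw [this]
  push_cast
  rw [hθ]
  simpa using Real.cos_nat_mul_pi_sub 0 i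

lemma remez_cos_anti (d : ℕ) (hd : 1 ≤ d) :
    ∀ p q : ℕ, p < q → q ≤ d →
      Real.cos (q * Real.pi / d) < Real.cos (p * Real.pi / d) := by
  intro p q hpq hq
  have hdpos : (0:ℝ) < d := by exact_mod_cast hd
  have hp : (p:ℝ) * Real.pi / d ∈ Set.Icc 0 Real.pi := by
    constructor
    · positivity
    · rw [div_le_iff₀ hdpos]
      have : (p:ℝ) ≤ d := by exact_mod_cast hpq.le.trans hq
      nlinarith [Real.pi_pos]
  have hq' : (q:ℝ) * Real.pi / d ∈ Set.Icc 0 Real.pi := by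
    constructor
    · positivity
    · rw [div_le_iff₀ hdpos]
      have : (q:ℝ) ≤ d := by exact_mod_cast hq
      nlinarith [Real.pi_pos]
  have hlt : (p:ℝ) * Real.pi / d < (q:ℝ) * Real.pi / d := by
    have : (p:ℝ) < q := by exact_mod_cast hpq
    have := Real.pi_pos
    gcongr
  exact Real.strictAntiOn_cos hp hq' hlt

lemma remez_cheb_sum (d : ℕ) (hd : 1 ≤ d) :
    ∑ i ∈ Finset.range (d+1), ∏ j ∈ (Finset.range (d+1)).erase i,
      |Real.cos (i*Real.pi/d) - Real.cos (j*Real.pi/d)|⁻¹ = 2^(d-1) := by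
  classical
  set c : ℕ → ℝ := fun i => Real.cos (i * Real.pi / d) with hc
  have hanti : ∀ p q : ℕ, p < q → q ≤ d → c q < c p := remez_cos_anti d hd
  have hinj : Set.InjOn c (Finset.range (d+1) : Set ℕ) := by
    intro p hp q hq hpq
    simp only [Finset.coe_range, Set.mem_Iio] at hp hq
    by_contra hne
    rcases lt_or_gt_of_ne hne with h | h
    · exact absurd hpq (ne_of_gt (hanti p q h (by omega)))
    · exact absurd hpq (ne_of_lt (hanti q p h (by omega)))
  have hdeg : (T ℝ d).degree < ((Finset.range (d+1)).card : WithBot ℕ) := by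
    rw [Finset.card_range]
    refine (degree_le_natDegree).trans_lt ?_
    exact_mod_cast Nat.lt_succ_of_le (remez_cheb_deg_coeff d).1
  have hinterp : T ℝ d =
      Lagrange.interpolate (Finset.range (d+1)) c (fun i => (T ℝ d).eval (c i)) :=
    Lagrange.eq_interpolate hinj hdeg
  have hcard : ∀ i ∈ Finset.range (d+1), ((Finset.range (d+1)).erase i).card = d := by
    intro i hi
    rw [Finset.card_erase_of_mem hi, Finset.card_range]
    omega
  have hcoeff : (T ℝ d).coeff d =
      ∑ i ∈ Finset.range (d+1), (-1:ℝ)^i *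
        ((-1:ℝ)^i * ∏ j ∈ (Finset.range (d+1)).erase i, |c i - c j|)⁻¹ := by
    conv_lhs => rw [hinterp]
    rw [Lagrange.interpolate_apply, Polynomial.finset_sum_coeff]
    refine Finset.sum_congr rfl fun i hi => ?_
    rw [coeff_C_mul, remez_basis_coeff _ _ _ _ (hcard i hi), remez_cheb_nodes_eval d hd i]
    congr 1
    rw [Finset.prod_inv_distrib, remez_prod_sign d i hi c hanti]
  have habs : ∀ i, ((-1:ℝ)^i * ((-1:ℝ)^i *
      ∏ j ∈ (Finset.range (d+1)).erase i, |c i - c j|)⁻¹)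
      = ∏ j ∈ (Finset.range (d+1)).erase i, |c i - c j|⁻¹ := by
    intro i
    rw [mul_inv, ← mul_assoc,
      mul_inv_cancel₀ (pow_ne_zero i (by norm_num : (-1:ℝ) ≠ 0)), one_mul,
      ← Finset.prod_inv_distrib]
  have hval : (T ℝ d).coeff d = 2^(d-1) := by
    rw [(remez_cheb_deg_coeff d).2, if_neg (by omega)]
  rw [← hval, hcoeff]
  exact Finset.sum_congr rfl fun i _ => (habs i).symm

/-- The classical one-dimensional Remez inequality with constant `A = 4`. -/
theorem remez_inequality (d : ℕ) (P : Polynomial ℝ) (hPd : P.natDegree ≤ d)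
    (a b : ℝ) (hab : a ≤ b) (E : Set ℝ) (hE : MeasurableSet E)
    (hEJ : E ⊆ Set.Icc a b) (hEpos : 0 < volume E) :
    ∀ x ∈ Set.Icc a b, |P.eval x| ≤
      (4 * (b - a) / (volume E).toReal) ^ d * sSup ((fun y => |P.eval y|) '' E) := by
  classical
  intro x hx
  have hEne : E.Nonempty := nonempty_of_measure_ne_zero hEpos.ne'
  have hIccfin : volume (Set.Icc a b) < ⊤ := by
    rw [Real.volume_Icc]; exact ENNReal.ofReal_lt_top
  have hEfin : volume E ≠ ⊤ := ((measure_mono hEJ).trans_lt hIccfin).ne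
  set m := (volume E).toReal with hm
  have hmpos : 0 < m := ENNReal.toReal_pos hEpos.ne' hEfin
  set L := b - a with hL
  have hmL : m ≤ L := by
    have h1 : volume E ≤ volume (Set.Icc a b) := measure_mono hEJ
    rw [Real.volume_Icc] at h1
    exact ENNReal.toReal_le_of_le_ofReal (by linarith) h1
  have hcont : Continuous fun y : ℝ => |P.eval y| := (Polynomial.continuous P).abs
  set M := sSup ((fun y => |P.eval y|) '' E) with hMdef
  have hbdd : BddAbove ((fun y => |P.eval y|) '' E) :=
    (isCompact_Icc.bddAbove_image hcont.continuousOn).mono (Set.image_mono hEJ)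
  have hMle : ∀ y ∈ E, |P.eval y| ≤ M := fun y hy => le_csSup hbdd ⟨y, hy, rfl⟩
  have hMcl : ∀ y ∈ closure E, |P.eval y| ≤ M := fun y hy =>
    closure_minimal (fun z hz => hMle z hz) (isClosed_le hcont continuous_const) hy
  have hM0 : 0 ≤ M := by
    obtain ⟨y, hy⟩ := hEne
    exact (abs_nonneg _).trans (hMle y hy)
  by_cases hd0 : d = 0
  · subst hd0
    have hPC : P = C (P.coeff 0) := Polynomial.eq_C_of_natDegree_le_zero hPd
    obtain ⟨y, hy⟩ := hEne
    have : |P.eval x| = |P.eval y| := by rw [hPC]; simp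
    rw [this, pow_zero, one_mul]
    exact hMle y hy
  have hd : 1 ≤ d := Nat.one_le_iff_ne_zero.mpr hd0
  -- the measure distribution function
  set F : ℝ → ℝ := fun z => (volume (E ∩ Set.Iic z)).toReal with hF
  have hfin : ∀ z, volume (E ∩ Set.Iic z) ≠ ⊤ := fun z =>
    ((measure_mono Set.inter_subset_left).trans_lt hEfin.lt_top).ne
  have hFmono : Monotone F := fun u v huv =>
    ENNReal.toReal_mono (hfin v)
      (measure_mono (Set.inter_subset_inter_right _ (Set.Iic_subset_Iic.mpr huv)))
  have hFsplit : ∀ u v : ℝ, u ≤ v → F v - F u = (volume (E ∩ Set.Ioc u v)).toReal := by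
    intro u v huv
    have hun : E ∩ Set.Iic v = (E ∩ Set.Iic u) ∪ (E ∩ Set.Ioc u v) := by
      rw [← Set.inter_union_distrib_left, Set.Iic_union_Ioc_eq_Iic huv]
    have hdisj : Disjoint (E ∩ Set.Iic u) (E ∩ Set.Ioc u v) :=
      Set.disjoint_of_subset Set.inter_subset_right Set.inter_subset_right
        (Set.Iic_disjoint_Ioc le_rfl)
    have hmeas : volume (E ∩ Set.Iic v) = volume (E ∩ Set.Iic u) + volume (E ∩ Set.Ioc u v) := by
      rw [hun]
      exact measure_union hdisj (hE.inter measurableSet_Ioc)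
    rw [hF]
    simp only
    rw [hmeas, ENNReal.toReal_add (hfin u)
      ((measure_mono Set.inter_subset_left).trans_lt hEfin.lt_top).ne]
    ring
  have hFlip : ∀ u v : ℝ, u ≤ v → F v - F u ≤ v - u := by
    intro u v huv
    rw [hFsplit u v huv]
    have h1 : volume (E ∩ Set.Ioc u v) ≤ ENNReal.ofReal (v - u) := by
      rw [← Real.volume_Ioc]
      exact measure_mono Set.inter_subset_right
    exact ENNReal.toReal_le_of_le_ofReal (by linarith) h1
  have hFcont : Continuous F := by
    refine LipschitzWith.continuous (K := 1) (LipschitzWith.of_dist_le_mul fun u v => ?_)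
    simp only [NNReal.coe_one, ENNReal.coe_one, one_mul, Real.dist_eq]
    rcases le_total u v with h | h
    · rw [abs_of_nonpos (by linarith [hFmono h] : F u - F v ≤ 0)]
      have := hFlip u v h
      rw [abs_of_nonpos (by linarith : u - v ≤ 0)]
      linarith
    · rw [abs_of_nonneg (by linarith [hFmono h] : 0 ≤ F u - F v)]
      have := hFlip v u h
      rw [abs_of_nonneg (by linarith : 0 ≤ u - v)]
      linarith
  have hFa : F a = 0 := by
    have hsub : E ∩ Set.Iic a ⊆ {a} := fun y hy => le_antisymm hy.2 (hEJ hy.1).1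
    rw [hF]
    simp only
    rw [measure_mono_null hsub Real.volume_singleton]
    simp
  have hFb : F b = m := by
    have hEb : E ∩ Set.Iic b = E := Set.inter_eq_left.mpr fun y hy => (hEJ hy).2
    show (volume (E ∩ Set.Iic b)).toReal = m
    rw [hEb]
  -- Chebyshev fractions
  set g : ℕ → ℝ := fun i => (1 - Real.cos (i * Real.pi / d))/2 with hg
  have hgmono : ∀ p q : ℕ, p < q → q ≤ d → g p < g q := by
    intro p q hpq hq
    have := remez_cos_anti d hd p q hpq hq
    simp only [hg]
    linarith
  have hg0 : g 0 = 0 := by simp [hg]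
  have hg1 : ∀ i : ℕ, i ≤ d → g i ≤ 1 := by
    intro i hi
    have := Real.neg_one_le_cos ((i:ℝ) * Real.pi / d)
    simp only [hg]
    linarith
  -- the nodes
  set t : ℕ → ℝ := fun i => if i = 0 then sInf E else sInf {z : ℝ | g i * m ≤ F z} with ht
  have hbddE : BddBelow E := ⟨a, fun y hy => (hEJ hy).1⟩
  have hSprop : ∀ i : ℕ, 1 ≤ i → i ≤ d → F (t i) = g i * m ∧ t i ∈ closure E := by
    intro i h1 h2
    set S := {z : ℝ | g i * m ≤ F z} with hS
    have hti : t i = sInf S := by rw [ht]; simp [Nat.one_le_iff_ne_zero.mp h1]; rfl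
    have hgi : 0 < g i := hg0 ▸ hgmono 0 i h1 h2
    have hbS : b ∈ S := by
      show g i * m ≤ F b
      rw [hFb]
      nlinarith [hg1 i h2]
    have hlbS : ∀ z ∈ S, a ≤ z := by
      intro z hz
      by_contra hcon
      push_neg at hcon
      have h3 : F z ≤ F a := hFmono hcon.le
      rw [hFa] at h3
      have : g i * m ≤ 0 := le_trans hz h3
      nlinarith
    have hSbdd : BddBelow S := ⟨a, hlbS⟩
    have hSne : S.Nonempty := ⟨b, hbS⟩
    have hScl : IsClosed S := isClosed_le continuous_const hFcont
    have htmem : t i ∈ S := hti ▸ hScl.csInf_mem hSne hSbdd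
    have hFge : g i * m ≤ F (t i) := htmem
    have hFle : F (t i) ≤ g i * m := by
      by_contra hgt
      push_neg at hgt
      have hopen : IsOpen {z : ℝ | g i * m < F z} := isOpen_lt continuous_const hFcont
      obtain ⟨ε, hε, hball⟩ := Metric.isOpen_iff.mp hopen (t i) hgt
      have hmem2 : t i - ε/2 ∈ S := by
        have hb2 : t i - ε/2 ∈ Metric.ball (t i) ε := by
          rw [Metric.mem_ball, Real.dist_eq, abs_of_neg (by linarith : t i - ε/2 - t i < 0)]
          linarith
        show g i * m ≤ F (t i - ε/2)
        exact le_of_lt (hball hb2)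
      have := csInf_le hSbdd hmem2
      rw [← hti] at this
      linarith
    have hFt : F (t i) = g i * m := le_antisymm hFle hFge
    refine ⟨hFt, ?_⟩
    rw [Metric.mem_closure_iff]
    intro ε hε
    rcases le_or_gt (g i * m) (F (t i - ε/2)) with hc | hc
    · have := csInf_le hSbdd hc
      rw [← hti] at this
      linarith
    · have hlt : 0 < F (t i) - F (t i - ε/2) := by rw [hFt]; linarith
      rw [hFsplit _ _ (by linarith)] at hlt
      have hne : (E ∩ Set.Ioc (t i - ε/2) (t i)).Nonempty := by
        by_contra hemp
        rw [Set.not_nonempty_iff_eq_empty] at hemp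
        rw [hemp] at hlt
        simp at hlt
      obtain ⟨y, hyE, hy1, hy2⟩ := hne
      refine ⟨y, hyE, ?_⟩
      rw [Real.dist_eq, abs_of_nonneg (by linarith)]
      linarith
  have ht00 : t 0 = sInf E := by simp [ht]
  have hFt0 : F (t 0) = g 0 * m := by
    have hsub : E ∩ Set.Iic (sInf E) ⊆ {sInf E} := fun y hy =>
      le_antisymm hy.2 (csInf_le hbddE hy.1)
    rw [hg0, zero_mul, ht00]
    show (volume (E ∩ Set.Iic (sInf E))).toReal = 0
    rw [measure_mono_null hsub Real.volume_singleton]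
    simp
  have hFt : ∀ i : ℕ, i ≤ d → F (t i) = g i * m := by
    intro i hi
    rcases Nat.eq_zero_or_pos i with h | h
    · subst h; exact hFt0
    · exact (hSprop i h hi).1
  have htcl : ∀ i : ℕ, i ≤ d → t i ∈ closure E := by
    intro i hi
    rcases Nat.eq_zero_or_pos i with h | h
    · subst h
      rw [ht00]
      exact csInf_mem_closure hEne hbddE
    · exact (hSprop i h hi).2
  have htIcc : ∀ i : ℕ, i ≤ d → t i ∈ Set.Icc a b := fun i hi =>
    closure_minimal hEJ isClosed_Icc (htcl i hi)
  have hgap : ∀ p q : ℕ, p < q → q ≤ d → (g q - g p) * m ≤ t q - t p := by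
    intro p q hpq hq
    have hp : p ≤ d := le_of_lt (lt_of_lt_of_le hpq hq)
    have h1 : F (t q) - F (t p) = (g q - g p) * m := by
      rw [hFt q hq, hFt p hp]; ring
    have hgg : g p < g q := hgmono p q hpq hq
    have hlt : t p < t q := by
      by_contra hcon
      push_neg at hcon
      have h2 := hFmono hcon
      rw [hFt q hq, hFt p hp] at h2
      nlinarith
    have := hFlip (t p) (t q) hlt.le
    linarith
  have htinj : Set.InjOn t (Finset.range (d+1) : Set ℕ) := by
    intro p hp q hq hpq
    simp only [Finset.coe_range, Set.mem_Iio] at hp hq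
    by_contra hne
    rcases lt_or_gt_of_ne hne with h | h
    · have := hgap p q h (by omega)
      have := hgmono p q h (by omega)
      nlinarith
    · have := hgap q p h (by omega)
      have := hgmono q p h (by omega)
      nlinarith
  -- interpolation
  set s : Finset ℕ := Finset.range (d+1) with hs
  have hdegP : P.degree < (s.card : WithBot ℕ) := by
    rw [hs, Finset.card_range]
    refine (degree_le_natDegree).trans_lt ?_
    exact_mod_cast Nat.lt_succ_of_le hPd
  have hPi : P = Lagrange.interpolate s t (fun i => P.eval (t i)) :=
    Lagrange.eq_interpolate htinj hdegP
  have heval : P.eval x = ∑ i ∈ s, P.eval (t i) *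
      ∏ j ∈ s.erase i, ((t i - t j)⁻¹ * (x - t j)) := by
    conv_lhs => rw [hPi]
    rw [Lagrange.interpolate_apply, Polynomial.eval_finset_sum]
    refine Finset.sum_congr rfl fun i hi => ?_
    rw [eval_mul, eval_C]
    congr 1
    rw [Lagrange.basis, Polynomial.eval_prod]
    refine Finset.prod_congr rfl fun j hj => ?_
    simp [Lagrange.basisDivisor]
  set c : ℕ → ℝ := fun i => Real.cos (i * Real.pi / d) with hc
  have hgc : ∀ i, g i = (1 - c i)/2 := fun i => rfl
  have hnode : ∀ i ∈ s, ∀ j ∈ s.erase i,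
      |(t i - t j)⁻¹ * (x - t j)| ≤ (2*L/m) * |c i - c j|⁻¹ := by
    intro i hi j hj
    obtain ⟨hne, hjs⟩ := Finset.mem_erase.mp hj
    have hi' : i ≤ d := by
      have := Finset.mem_range.mp (hs ▸ hi); omega
    have hj' : j ≤ d := by
      have := Finset.mem_range.mp (hs ▸ hjs); omega
    have hts := htIcc i hi'
    have htj := htIcc j hj'
    have hxj : |x - t j| ≤ L := by
      rw [abs_le]
      constructor
      · simp only [hL]; linarith [hx.1, hx.2, htj.1, htj.2]
      · simp only [hL]; linarith [hx.1, hx.2, htj.1, htj.2]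
    have hden : (m/2) * |c i - c j| ≤ |t i - t j| := by
      rcases lt_or_gt_of_ne hne with h | h
      · -- h : j < i
        have h1 := hgap j i h hi'
        have h2 : c i < c j := remez_cos_anti d hd j i h hi'
        have h3 : g i - g j = (c j - c i)/2 := by rw [hgc, hgc]; ring
        rw [abs_of_neg (by linarith : c i - c j < 0),
          abs_of_pos (by nlinarith : (0:ℝ) < t i - t j)]
        nlinarith
      · -- h : j > i
        have h1 := hgap i j h hj'
        have h2 : c j < c i := remez_cos_anti d hd i j h hj'
        have h3 : g j - g i = (c i - c j)/2 := by rw [hgc, hgc]; ring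
        rw [abs_of_pos (by linarith : (0:ℝ) < c i - c j),
          abs_of_neg (by nlinarith : t i - t j < 0)]
        nlinarith
    have hcpos : 0 < |c i - c j| := by
      rcases lt_or_gt_of_ne hne with h | h
      · have := remez_cos_anti d hd j i h hi'; rw [abs_pos]; intro hcon; nlinarith
      · have := remez_cos_anti d hd i j h hj'; rw [abs_pos]; intro hcon; nlinarith
    have hdpos : 0 < (m/2) * |c i - c j| := by positivity
    rw [abs_mul, abs_inv]
    rw [inv_mul_eq_div]
    rw [div_le_iff₀ (lt_of_lt_of_le hdpos hden)]
    calc |x - t j| ≤ L := hxj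
      _ = (2*L/m * |c i - c j|⁻¹) * ((m/2) * |c i - c j|) := by
          field_simp
      _ ≤ (2*L/m * |c i - c j|⁻¹) * |t i - t j| := by
          have hnn : 0 ≤ 2*L/m * |c i - c j|⁻¹ :=
            mul_nonneg (div_nonneg (by linarith : (0:ℝ) ≤ 2*L) hmpos.le)
              (inv_nonneg.mpr (abs_nonneg _))
          exact mul_le_mul_of_nonneg_left hden hnn
  have hcard : ∀ i ∈ s, (s.erase i).card = d := by
    intro i hi
    rw [hs, Finset.card_erase_of_mem (hs ▸ hi), Finset.card_range]
    omega
  have hbound : |P.eval x| ≤ M * (2*L/m)^d *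
      ∑ i ∈ s, ∏ j ∈ s.erase i, |c i - c j|⁻¹ := by
    rw [heval]
    calc |∑ i ∈ s, P.eval (t i) * ∏ j ∈ s.erase i, ((t i - t j)⁻¹ * (x - t j))|
        ≤ ∑ i ∈ s, |P.eval (t i) * ∏ j ∈ s.erase i, ((t i - t j)⁻¹ * (x - t j))| :=
          Finset.abs_sum_le_sum_abs _ _
      _ ≤ ∑ i ∈ s, M * ((2*L/m)^d * ∏ j ∈ s.erase i, |c i - c j|⁻¹) := by
          refine Finset.sum_le_sum fun i hi => ?_
          rw [abs_mul]
          have h1 : |P.eval (t i)| ≤ M := hMcl _ (htcl i (by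
            have := Finset.mem_range.mp (hs ▸ hi); omega))
          have h2 : |∏ j ∈ s.erase i, ((t i - t j)⁻¹ * (x - t j))|
              ≤ (2*L/m)^d * ∏ j ∈ s.erase i, |c i - c j|⁻¹ := by
            rw [Finset.abs_prod]
            calc ∏ j ∈ s.erase i, |(t i - t j)⁻¹ * (x - t j)|
                ≤ ∏ j ∈ s.erase i, ((2*L/m) * |c i - c j|⁻¹) :=
                  Finset.prod_le_prod (fun j _ => abs_nonneg _) (hnode i hi)
              _ = (2*L/m)^d * ∏ j ∈ s.erase i, |c i - c j|⁻¹ := by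
                  rw [Finset.prod_mul_distrib, Finset.prod_const, hcard i hi]
          exact mul_le_mul h1 h2 (abs_nonneg _) hM0
      _ = M * (2*L/m)^d * ∑ i ∈ s, ∏ j ∈ s.erase i, |c i - c j|⁻¹ := by
          rw [← Finset.mul_sum, ← Finset.mul_sum, ← mul_assoc]
  have hsum : ∑ i ∈ s, ∏ j ∈ s.erase i, |c i - c j|⁻¹ = 2^(d-1) :=
    remez_cheb_sum d hd
  rw [hsum] at hbound
  refine hbound.trans ?_
  have hLpos : 0 < L := lt_of_lt_of_le hmpos hmL
  have hfinal : M * (2*L/m)^d * 2^(d-1) ≤ (4 * L / m)^d * M := by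
    have h1 : (2:ℝ)^(d-1) ≤ 2^d := by
      apply pow_le_pow_right₀ (by norm_num) (by omega)
    have h2 : (2*L/m)^d * 2^d = (4*L/m)^d := by
      rw [← mul_pow]
      congr 1
      field_simp
      ring
    calc M * (2*L/m)^d * 2^(d-1) ≤ M * (2*L/m)^d * 2^d := by
          have : 0 ≤ M * (2*L/m)^d := by positivity
          exact mul_le_mul_of_nonneg_left h1 this
      _ = (4*L/m)^d * M := by rw [mul_assoc, h2]; ring
  exact hfinal
end
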